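/- arXiv:2110.11784 — 2 statements merged into one kernel-verified Lean document; each statement's English description precedes it below -/
import Mathlib

section
/- Let P(x) = ½‖y − A x‖² + λ J(x) where J is the SLOPE norm with weights w_1 > 0, w_1 ≥ ... ≥ w_n ≥ 0 and λ > 0. Then the zero vector is NOT a minimizer of P if and only if λ < λ_max := max_{q ∈ {1,...,n}} ( Σ_{k=1}^{q} |Aᵀy|_{[k]} ) / ( Σ_{k=1}^{q} w_k ). -/
/-! Write `g = Aᵀ y`, so that `P x - P 0 = ½‖A x‖² - ⟨g, x⟩ + λ J(x)`. If every top-`q` sum of `|g|`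
is at most `λ` times the sum of the first `q` weights, the rearrangement inequality followed by
summation by parts against the decreasing sequence `|x|_[k]` gives `⟨g, x⟩ ≤ λ J(x)`, so `0` is a
minimizer. Otherwise take a violating `q` and `x = t v`, with `v` the sign pattern of `g` on its
`q` largest entries: then `⟨g, x⟩ = t Σ |g|_[k]` and `J(x) = t Σ w_k` while the quadratic term is
`O(t²)`, so `P x < P 0` for small `t > 0`. -/

open Finset Matrix

/-- `kth v k` is the `(k+1)`-th largest entry of `v` (zero-indexed: `kth v 0` is the largest). -/
noncomputable def kth {n : ℕ} (v : Fin n → ℝ) (k : ℕ) : ℝ :=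
  if h : k < n then v (Tuple.sort (fun i => -v i) ⟨k, h⟩) else 0

/-- `absKth v k` is the `(k+1)`-th largest absolute entry of `v` (zero-indexed). -/
noncomputable def absKth {n : ℕ} (v : Fin n → ℝ) (k : ℕ) : ℝ :=
  kth (fun i => |v i|) k

/-- The SLOPE (sorted-ℓ1) function with weights `w 0 ≥ w 1 ≥ …` (zero-indexed). -/
noncomputable def slopeNorm {n : ℕ} (w : ℕ → ℝ) (x : Fin n → ℝ) : ℝ :=
  ∑ k ∈ Finset.range n, w k * absKth x k

/-- Dual norm of a norm `J` on `ℝ^n`. -/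
noncomputable def dualNorm {n : ℕ} (J : (Fin n → ℝ) → ℝ) (g : Fin n → ℝ) : ℝ :=
  sSup {t : ℝ | ∃ x : Fin n → ℝ, J x ≤ 1 ∧ t = ∑ i, g i * x i}

/-- `dropIdx ℓ v` is the vector `v` deprived of its `ℓ`-th entry. -/
def dropIdx {n : ℕ} (ℓ : Fin n) (v : Fin n → ℝ) : Fin (n - 1) → ℝ :=
  fun j => if h : (j : ℕ) < (ℓ : ℕ) then v ⟨j, lt_trans h ℓ.isLt⟩
           else v ⟨(j : ℕ) + 1, by have := j.isLt; omega⟩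

noncomputable def absSortPerm {n : ℕ} (v : Fin n → ℝ) : Equiv.Perm (Fin n) :=
  Tuple.sort fun i => -|v i|

section absKth

variable {n : ℕ} (v : Fin n → ℝ)

lemma absKth_fin (k : Fin n) : absKth v k = |v (absSortPerm v k)| := by
  simp [absKth, kth, absSortPerm]

lemma absKth_of_le {k : ℕ} (hk : n ≤ k) : absKth v k = 0 := by
  simp [absKth, kth, not_lt.mpr hk]

lemma absKth_nonneg (k : ℕ) : 0 ≤ absKth v k := by
  rcases lt_or_ge k n with hk | hk
  · exact absKth_fin v ⟨k, hk⟩ ▸ abs_nonneg _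
  · exact (absKth_of_le v hk).ge

lemma antitone_abs_comp_absSortPerm : Antitone fun k => |v (absSortPerm v k)| :=
  fun _ _ hab => by simpa [absSortPerm] using Tuple.monotone_sort (fun i => -|v i|) hab

lemma antitone_absKth : Antitone (absKth v) := by
  intro a b hab
  rcases lt_or_ge b n with hb | hb
  · have ha : a < n := hab.trans_lt hb
    rw [← Fin.val_mk ha, ← Fin.val_mk hb, absKth_fin, absKth_fin]
    exact antitone_abs_comp_absSortPerm v (Fin.mk_le_mk.mpr hab)
  · exact (absKth_of_le v hb).trans_le (absKth_nonneg v a)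

/-- Ties in the sorting do not matter. -/
lemma absKth_eq_of_antitone (σ : Equiv.Perm (Fin n)) (hσ : Antitone fun k => |v (σ k)|)
    (k : Fin n) : absKth v k = |v (σ k)| := by
  have h := congrFun (Tuple.comp_sort_eq_comp_iff_monotone (f := fun i => -|v i|) (σ := σ)
    |>.mpr hσ.neg) k
  simp only [Function.comp_apply, neg_inj] at h
  rw [absKth_fin, absSortPerm, h]

lemma absKth_smul (t : ℝ) (k : ℕ) : absKth (t • v) k = |t| * absKth v k := by
  rcases lt_or_ge k n with hk | hk
  · have hσ : Antitone fun j => |(t • v) (absSortPerm v j)| := by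
      simpa only [Pi.smul_apply, smul_eq_mul, abs_mul] using
        (antitone_abs_comp_absSortPerm v).const_mul (abs_nonneg t)
    rw [← Fin.val_mk hk, absKth_eq_of_antitone _ _ hσ, absKth_fin, Pi.smul_apply, smul_eq_mul,
      abs_mul]
  · rw [absKth_of_le _ hk, absKth_of_le _ hk, mul_zero]

end absKth

lemma slopeNorm_smul {n : ℕ} (w : ℕ → ℝ) (t : ℝ) (x : Fin n → ℝ) :
    slopeNorm w (t • x) = |t| * slopeNorm w x := by
  simp only [slopeNorm, absKth_smul, mul_sum]
  exact sum_congr rfl fun _ _ => mul_left_comm _ _ _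

lemma slopeNorm_zero {n : ℕ} (w : ℕ → ℝ) : slopeNorm w (0 : Fin n → ℝ) = 0 := by
  simpa using slopeNorm_smul w 0 (0 : Fin n → ℝ)

lemma sum_mul_le_sum_mul_of_partial_sums_le {R : Type*} [CommRing R] [LinearOrder R]
    [IsStrictOrderedRing R] {a c b : ℕ → R} {n : ℕ} (hb : Antitone b) (hbn : 0 ≤ b (n - 1))
    (h : ∀ q < n, ∑ k ∈ range (q + 1), a k ≤ ∑ k ∈ range (q + 1), c k) :
    ∑ k ∈ range n, b k * a k ≤ ∑ k ∈ range n, b k * c k := by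
  rcases Nat.eq_zero_or_pos n with rfl | hn
  · simp
  have by_parts := fun d : ℕ → R => sum_range_by_parts b d n
  simp only [smul_eq_mul] at by_parts
  rw [by_parts, by_parts]
  refine sub_le_sub (mul_le_mul_of_nonneg_left ?_ hbn) (sum_le_sum fun q hq => ?_)
  · simpa [Nat.sub_add_cancel hn] using h (n - 1) (by omega)
  · have hq : q < n := by rw [mem_range] at hq; omega
    exact mul_le_mul_of_nonpos_left (h q hq) (sub_nonpos.mpr (hb q.le_succ))

lemma sum_abs_mul_abs_le_sum_absKth_mul_absKth {n : ℕ} (g x : Fin n → ℝ) :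
    ∑ i, |g i| * |x i| ≤ ∑ k ∈ range n, absKth g k * absKth x k := by
  set σ := absSortPerm g
  set τ := absSortPerm x
  have hmono : Monovary (fun k : Fin n => absKth g k) (fun k : Fin n => absKth x k) :=
    ((antitone_absKth g).comp_monotone Fin.val_strictMono.monotone).monovary
      ((antitone_absKth x).comp_monotone Fin.val_strictMono.monotone)
  calc ∑ i, |g i| * |x i| = ∑ k : Fin n, absKth g k * absKth x ((σ.trans τ.symm) k) := by
        rw [← Equiv.sum_comp σ]
        refine sum_congr rfl fun k _ => ?_
        simp [absKth_fin, σ, τ]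
    _ ≤ ∑ k : Fin n, absKth g k * absKth x k := hmono.sum_mul_comp_perm_le_sum_mul
    _ = ∑ k ∈ range n, absKth g k * absKth x k :=
        Fin.sum_univ_eq_sum_range (fun k => absKth g k * absKth x k) n

lemma dotProduct_le_mul_slopeNorm {n : ℕ} {w : ℕ → ℝ} {g : Fin n → ℝ} {c : ℝ}
    (h : ∀ q < n, ∑ k ∈ range (q + 1), absKth g k ≤ c * ∑ k ∈ range (q + 1), w k)
    (x : Fin n → ℝ) : g ⬝ᵥ x ≤ c * slopeNorm w x := by
  calc g ⬝ᵥ x ≤ ∑ i, |g i| * |x i| :=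
        sum_le_sum fun i _ => (le_abs_self _).trans (abs_mul _ _).le
    _ ≤ ∑ k ∈ range n, absKth x k * absKth g k := by
        simpa only [mul_comm] using sum_abs_mul_abs_le_sum_absKth_mul_absKth g x
    _ ≤ ∑ k ∈ range n, absKth x k * (c * w k) :=
        sum_mul_le_sum_mul_of_partial_sums_le (antitone_absKth x) (absKth_nonneg x _)
          fun q hq => by simpa only [mul_sum] using h q hq
    _ = c * slopeNorm w x := by
        simp only [slopeNorm, mul_sum]
        exact sum_congr rfl fun _ _ => by ring

/-- Signs are `±1` even where `g` vanishes, so that exactly `q + 1` entries have modulus one. -/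
noncomputable def topSignVector {n : ℕ} (g : Fin n → ℝ) (q : ℕ) : Fin n → ℝ :=
  fun i => if ((absSortPerm g).symm i : ℕ) < q + 1 then (if 0 ≤ g i then 1 else -1) else 0

lemma sum_range_ite_lt {M : Type*} [AddCommMonoid M] (f : ℕ → M) {m n : ℕ} (hmn : m ≤ n) :
    ∑ k ∈ range n, (if k < m then f k else 0) = ∑ k ∈ range m, f k := by
  rw [← sum_filter]
  congr 1
  ext k
  simp only [mem_filter, mem_range]
  omega

section topSignVector

variable {n : ℕ} (g : Fin n → ℝ) {q : ℕ}

lemma abs_topSignVector_absSortPerm (k : Fin n) :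
    |topSignVector g q (absSortPerm g k)| = if (k : ℕ) < q + 1 then 1 else 0 := by
  unfold topSignVector
  split_ifs <;> simp_all

lemma absKth_topSignVector (k : Fin n) :
    absKth (topSignVector g q) k = if (k : ℕ) < q + 1 then 1 else 0 := by
  have hσ : Antitone fun j => |topSignVector g q (absSortPerm g j)| := by
    intro a b hab
    simp only [abs_topSignVector_absSortPerm]
    have : (a : ℕ) ≤ b := hab
    split_ifs <;> norm_num; omega
  rw [absKth_eq_of_antitone _ _ hσ, abs_topSignVector_absSortPerm]

lemma slopeNorm_topSignVector (w : ℕ → ℝ) (hq : q < n) :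
    slopeNorm w (topSignVector g q) = ∑ k ∈ range (q + 1), w k := by
  rw [slopeNorm, ← sum_range_ite_lt w hq]
  refine sum_congr rfl fun k hk => ?_
  rw [← Fin.val_mk (mem_range.mp hk), absKth_topSignVector]
  simp

lemma dotProduct_topSignVector (hq : q < n) :
    g ⬝ᵥ topSignVector g q = ∑ k ∈ range (q + 1), absKth g k := by
  have hterm (k : Fin n) : g (absSortPerm g k) * topSignVector g q (absSortPerm g k) =
      if (k : ℕ) < q + 1 then absKth g k else 0 := by
    rw [absKth_fin]
    unfold topSignVector
    split_ifs <;> simp_all [abs_of_nonneg, abs_of_neg]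
  rw [dotProduct, ← Equiv.sum_comp (absSortPerm g), ← sum_range_ite_lt _ hq,
    ← Fin.sum_univ_eq_sum_range (fun k => if k < q + 1 then absKth g k else 0)]
  exact sum_congr rfl fun k _ => hterm k

end topSignVector

lemma sum_sq_sub_mulVec {R ι κ : Type*} [CommRing R] [Fintype ι] [Fintype κ]
    (A : Matrix ι κ R) (y : ι → R) (x : κ → R) :
    ∑ i, (y i - (A *ᵥ x) i) ^ 2 = ∑ i, y i ^ 2 - 2 * (Aᵀ *ᵥ y) ⬝ᵥ x + ∑ i, (A *ᵥ x) i ^ 2 := by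
  rw [mulVec_transpose, ← dotProduct_mulVec, dotProduct, mul_sum, ← sum_sub_distrib,
    ← sum_add_distrib]
  exact sum_congr rfl fun i _ => by ring

lemma forall_dotProduct_le_iff {m n : ℕ} (B : Matrix (Fin m) (Fin n) ℝ) (g : Fin n → ℝ)
    (w : ℕ → ℝ) (c : ℝ) :
    (∀ x, g ⬝ᵥ x ≤ 1 / 2 * ∑ i, (B *ᵥ x) i ^ 2 + c * slopeNorm w x) ↔
      ∀ q < n, ∑ k ∈ range (q + 1), absKth g k ≤ c * ∑ k ∈ range (q + 1), w k := by
  refine ⟨fun h => ?_, fun h x => ?_⟩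
  · by_contra! ⟨q, hq, hlt⟩
    set v := topSignVector g q
    set C := ∑ i, (B *ᵥ v) i ^ 2
    have hC : 0 ≤ C := sum_nonneg fun i _ => sq_nonneg _
    -- Along `t • v` the gain is linear in `t` and the loss quadratic, so a small `t` wins.
    set t := (∑ k ∈ range (q + 1), absKth g k - c * ∑ k ∈ range (q + 1), w k) / (C + 1)
    have ht : 0 < t := div_pos (sub_pos.mpr hlt) (by linarith)
    have htC : t * (C + 1) = ∑ k ∈ range (q + 1), absKth g k - c * ∑ k ∈ range (q + 1), w k :=
      div_mul_cancel₀ _ (by linarith)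
    have hquad : ∑ i, (B *ᵥ (t • v)) i ^ 2 = t ^ 2 * C := by
      simp only [mulVec_smul, Pi.smul_apply, smul_eq_mul, C, mul_sum]
      exact sum_congr rfl fun i _ => by ring
    have := h (t • v)
    rw [dotProduct_smul, dotProduct_topSignVector g hq, slopeNorm_smul,
      slopeNorm_topSignVector g w hq, hquad, abs_of_pos ht, smul_eq_mul] at this
    nlinarith
  · have := dotProduct_le_mul_slopeNorm h x
    have : 0 ≤ ∑ i, (B *ᵥ x) i ^ 2 := sum_nonneg fun i _ => sq_nonneg _
    linarith

theorem zero_not_minimizer_iff_general {m n : ℕ} (hn : 0 < n)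
    (A : Matrix (Fin m) (Fin n) ℝ) (y : Fin m → ℝ)
    (w : ℕ → ℝ) (hw0 : 0 < w 0)
    (hwa : ∀ i j : ℕ, i ≤ j → j < n → w j ≤ w i) (hwn : 0 ≤ w (n - 1))
    (lam : ℝ)
    (P : (Fin n → ℝ) → ℝ)
    (hP : ∀ x, P x = (1 / 2) * ∑ i, (y i - (A *ᵥ x) i) ^ 2 + lam * slopeNorm w x) :
    (¬ ∀ x : Fin n → ℝ, P 0 ≤ P x) ↔
      lam < (Finset.range n).sup' (Finset.nonempty_range_iff.mpr hn.ne')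
        (fun q => (∑ k ∈ Finset.range (q + 1), absKth (Aᵀ *ᵥ y) k) /
                  (∑ k ∈ Finset.range (q + 1), w k)) := by
  have hW : ∀ q < n, 0 < ∑ k ∈ range (q + 1), w k := fun q hq =>
    sum_pos' (fun k hk => hwn.trans (hwa k (n - 1) (by rw [mem_range] at hk; omega) (by omega)))
      ⟨0, mem_range.mpr q.succ_pos, hw0⟩
  have hP0 (x : Fin n → ℝ) :
      P 0 ≤ P x ↔ (Aᵀ *ᵥ y) ⬝ᵥ x ≤ 1 / 2 * ∑ i, (A *ᵥ x) i ^ 2 + lam * slopeNorm w x := by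
    rw [hP, hP, mulVec_zero, slopeNorm_zero, sum_sq_sub_mulVec]
    simp only [Pi.zero_apply, sub_zero, mul_zero, add_zero]
    constructor <;> intro <;> linarith
  simp only [hP0, forall_dotProduct_le_iff, not_forall, not_le, exists_prop, lt_sup'_iff,
    mem_range]
  exact exists_congr fun q => and_congr_right fun hq => (lt_div_iff₀ (hW q hq)).symm

theorem zero_not_minimizer_iff {m n : ℕ} (hn : 0 < n)
    (A : Matrix (Fin m) (Fin n) ℝ) (y : Fin m → ℝ)
    (w : ℕ → ℝ) (hw0 : 0 < w 0)
    (hwa : ∀ i j : ℕ, i ≤ j → j < n → w j ≤ w i) (hwn : 0 ≤ w (n - 1))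
    (lam : ℝ) (hlam : 0 < lam)
    (P : (Fin n → ℝ) → ℝ)
    (hP : ∀ x, P x = (1 / 2) * ∑ i, (y i - (A *ᵥ x) i) ^ 2 + lam * slopeNorm w x) :
    (¬ ∀ x : Fin n → ℝ, P 0 ≤ P x) ↔
      lam < (Finset.range n).sup' (Finset.nonempty_range_iff.mpr hn.ne')
        (fun q => (∑ k ∈ Finset.range (q + 1), absKth (Aᵀ *ᵥ y) k) /
                  (∑ k ∈ Finset.range (q + 1), w k)) :=
  zero_not_minimizer_iff_general hn A y w hw0 hwa hwn lam P hP
end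

section
/- The OSCAR penalty β₁‖x‖₁ + β₂ Σ_{j' > j} max(|x_{j'}|, |x_j|) equals the SLOPE norm Σ_{k=1}^{n} w_k |x|_{[k]} with weights w_k = β₁ + β₂ (n − k), for all x ∈ ℝ^n and all β₁, β₂ ≥ 0. -/
open Finset Matrix

/-!
Sort the absolute entries decreasingly by a permutation `σ`. The pair term sums the symmetric
function `max |x j| |x j'|` over unordered pairs, so it is invariant under `σ`; once sorted, the
maximum of a pair is the entry of smaller index, and the `k`-th largest entry is the maximum of
exactly the `n - 1 - k` pairs it forms with later entries.
-/

section PairSum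

variable {ι M : Type*} [Fintype ι] [LinearOrder ι] [AddCommMonoid M]

def pairSum (g : ι → ι → M) : M :=
  ∑ j', ∑ j ∈ univ.filter (fun j => j < j'), g j j'

omit [LinearOrder ι] in
theorem sum_sym2_filter_not_isDiag_map_perm [DecidableEq ι] (σ : Equiv.Perm ι) (p : Sym2 ι → M) :
    ∑ z ∈ (univ : Finset ι).sym2 with ¬z.IsDiag, p (z.map σ) =
      ∑ z ∈ (univ : Finset ι).sym2 with ¬z.IsDiag, p z := by
  refine sum_nbij' (Sym2.map σ) (Sym2.map σ.symm) ?_ ?_ ?_ ?_ (fun _ _ => rfl) <;>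
    simp [Sym2.isDiag_map σ.injective, Sym2.isDiag_map σ.symm.injective, Sym2.map_map]

theorem pairSum_eq_sum_sym2 (g : ι → ι → M) (hg : ∀ i j, g i j = g j i) :
    pairSum g = ∑ z ∈ (univ : Finset ι).sym2 with ¬z.IsDiag, Sym2.lift ⟨g, hg⟩ z := by
  rw [sum_sym2_filter_not_isDiag, pairSum,
    sum_finset_product_right' (f := fun i j => Sym2.lift ⟨g, hg⟩ s(i, j)) _ _ _ fun p => ?_]
  · rfl
  · simpa using ne_of_lt

theorem pairSum_comp_perm (g : ι → ι → M) (hg : ∀ i j, g i j = g j i) (σ : Equiv.Perm ι) :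
    pairSum (fun i j => g (σ i) (σ j)) = pairSum g := by
  rw [pairSum_eq_sum_sym2 g hg, pairSum_eq_sum_sym2 _ fun i j => hg (σ i) (σ j),
    ← sum_sym2_filter_not_isDiag_map_perm σ (Sym2.lift ⟨g, hg⟩)]
  refine sum_congr rfl fun z _ => ?_
  induction z using Sym2.ind
  rfl

theorem pairSum_eq_sum_card_nsmul (f : ι → M) :
    pairSum (fun j _ => f j) = ∑ j, #{j' | j < j'} • f j := by
  rw [pairSum, sum_comm' (t' := univ) (s' := fun j => {j' | j < j'}) (by simp)]
  simp [sum_const]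

theorem pairSum_max_of_antitone [LinearOrder M] {v : ι → M} (hv : Antitone v) :
    pairSum (fun j j' => max (v j') (v j)) = ∑ j, #{j' | j < j'} • v j := by
  rw [← pairSum_eq_sum_card_nsmul]
  exact sum_congr rfl fun j' _ =>
    sum_congr rfl fun j hj => max_eq_right (hv (mem_filter.1 hj).2.le)

end PairSum

section SortedEntries

variable {n : ℕ}

theorem kth_eq_comp_sort (v : Fin n → ℝ) (k : Fin n) :
    kth v k = v (Tuple.sort (fun i => -v i) k) :=
  dif_pos k.isLt

theorem antitone_comp_sort (v : Fin n → ℝ) :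
    Antitone fun k => v (Tuple.sort (fun i => -v i) k) :=
  fun _ _ hkl => neg_le_neg_iff.1 (Tuple.monotone_sort (fun i => -v i) hkl)

theorem slopeNorm_eq_sum_sort (w : ℕ → ℝ) (x : Fin n → ℝ) :
    slopeNorm w x = ∑ k : Fin n, w k * |x (Tuple.sort (fun i => -|x i|) k)| := by
  rw [slopeNorm, ← Fin.sum_univ_eq_sum_range (fun k => w k * absKth x k)]
  simp only [absKth, kth_eq_comp_sort]

end SortedEntries

theorem oscar_eq_slope_general {n : ℕ} (β₁ β₂ : ℝ)
    (x : Fin n → ℝ) :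
    β₁ * ∑ j, |x j| +
      β₂ * ∑ j' : Fin n, ∑ j ∈ Finset.univ.filter (fun j => j < j'), max |x j'| |x j| =
    slopeNorm (fun k => β₁ + β₂ * ((n - 1 - k : ℕ) : ℝ)) x := by
  set σ := Tuple.sort (fun i => -|x i|)
  have hanti : Antitone fun k => |x (σ k)| := antitone_comp_sort fun i => |x i|
  have hsum_abs : ∑ j, |x j| = ∑ k, |x (σ k)| := (Equiv.sum_comp σ _).symm
  have hpairs : pairSum (fun j j' => max |x j'| |x j|) =
      ∑ k : Fin n, ((n - 1 - k : ℕ) : ℝ) * |x (σ k)| := by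
    rw [← pairSum_comp_perm _ (fun i j => max_comm _ _) σ, pairSum_max_of_antitone hanti]
    simp only [filter_lt_eq_Ioi, Fin.card_Ioi, nsmul_eq_mul]
  rw [pairSum] at hpairs
  rw [hsum_abs, hpairs, slopeNorm_eq_sum_sort, mul_sum, mul_sum, ← sum_add_distrib]
  exact sum_congr rfl fun k _ => by ring

theorem oscar_eq_slope {n : ℕ} (β₁ β₂ : ℝ) (hβ₁ : 0 ≤ β₁) (hβ₂ : 0 ≤ β₂)
    (x : Fin n → ℝ) :
    β₁ * ∑ j, |x j| +
      β₂ * ∑ j' : Fin n, ∑ j ∈ Finset.univ.filter (fun j => j < j'), max |x j'| |x j| =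
    slopeNorm (fun k => β₁ + β₂ * ((n - 1 - k : ℕ) : ℝ)) x :=
  oscar_eq_slope_general β₁ β₂ x
end
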